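/- Let ρ be a density operator and |χ⟩ a unit vector in the range of ρ. Then there exist α > 0, β ≥ 0 and a positive semidefinite operator ρ̃ such that ρ = α|χ⟩⟨χ| + β ρ̃. -/

import Mathlib

open Matrix Kronecker BigOperators
open scoped ComplexOrder

/-- Trace distance/norm with factor 1/2: `‖A‖ = ½ tr √(AᴴA)`. -/
noncomputable def trNorm {m : Type*} [Fintype m] [DecidableEq m] (A : Matrix m m ℂ) : ℝ :=
  (1 / 2) * ((((Matrix.posSemidef_conjTranspose_mul_self A).1.eigenvectorUnitary : Matrix m m ℂ) *
    diagonal (((↑) : ℝ → ℂ) ∘ Real.sqrt ∘ (Matrix.posSemidef_conjTranspose_mul_self A).1.eigenvalues) *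
    (star (Matrix.posSemidef_conjTranspose_mul_self A).1.eigenvectorUnitary : Matrix m m ℂ)).trace).re

/-- A density operator: positive semidefinite with unit trace. -/
def IsDensity {m : Type*} [Fintype m] (ρ : Matrix m m ℂ) : Prop :=
  ρ.PosSemidef ∧ ρ.trace = 1

/-- A pure state: a density operator that is a (rank-one) projector. -/
def IsPureState {m : Type*} [Fintype m] (ρ : Matrix m m ℂ) : Prop :=
  IsDensity ρ ∧ ρ * ρ = ρ

/-- Completely positive trace-preserving map, via a Kraus representation. -/
def IsCPTP {m p : Type*} [Fintype m] [DecidableEq m] [Fintype p]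
    (Λ : Matrix m m ℂ →ₗ[ℂ] Matrix p p ℂ) : Prop :=
  ∃ (ι : Type) (s : Finset ι) (K : ι → Matrix p m ℂ),
    (∀ ρ, Λ ρ = ∑ i ∈ s, K i * ρ * (K i)ᴴ) ∧ ∑ i ∈ s, (K i)ᴴ * K i = 1

/-- Partial trace over the second (auxiliary) tensor factor. -/
noncomputable def ptraceB {m b : Type*} [Fintype b] (ρ : Matrix (m × b) (m × b) ℂ) :
    Matrix m m ℂ :=
  Matrix.of fun i j => ∑ k : b, ρ (i, k) (j, k)

/-- The projector `|χ⟩⟨χ|` onto the vector `χ`. -/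
noncomputable def pureProj {m : Type*} (χ : m → ℂ) : Matrix m m ℂ :=
  Matrix.vecMulVec χ (star χ)

/-- `χ` lies in the range of `ρ`. -/
def inRange {m : Type*} [Fintype m] (ρ : Matrix m m ℂ) (χ : m → ℂ) : Prop :=
  ∃ v, ρ *ᵥ v = χ

/-- Worst-case distinguishability: infimum of trace distances of pure states
taken from the ranges of `ρ` and `ρ'`. -/
noncomputable def wcd {m : Type*} [Fintype m] [DecidableEq m] (ρ ρ' : Matrix m m ℂ) : ℝ :=
  sInf { d : ℝ | ∃ χ χ' : m → ℂ, inRange ρ χ ∧ inRange ρ' χ' ∧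
    star χ ⬝ᵥ χ = 1 ∧ star χ' ⬝ᵥ χ' = 1 ∧ d = trNorm (pureProj χ - pureProj χ') }

/-!
Write `ρ = S²` with `S = √ρ` and `χ = ρ v = S w`, where `w = S v ≠ 0`. With `P` the orthogonal
projection onto `w`, `ρ = S P S + S (1 - P) S`; the first term is `‖w‖⁻² |χ⟩⟨χ|` and the second is
positive semidefinite because `1 - P` is a projection.
-/

namespace Matrix

section Field
variable {n R : Type*} [Fintype n] [DecidableEq n] [Field R] [PartialOrder R] [StarRing R]
  [StarOrderedRing R]

theorem posSemidef_one_sub_smul_vecMulVec {w : n → R} (hw : w ≠ 0) :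
    (1 - (star w ⬝ᵥ w)⁻¹ • vecMulVec w (star w)).PosSemidef := by
  set P := (star w ⬝ᵥ w)⁻¹ • vecMulVec w (star w)
  have hne : star w ⬝ᵥ w ≠ 0 := dotProduct_star_self_eq_zero.not.mpr hw
  have hP : Pᴴ = P := by
    rw [conjTranspose_smul, conjTranspose_vecMulVec, star_inv₀, star_dotProduct, star_star,
      star_star]
  have hPP : P * P = P := by
    rw [smul_mul_smul_comm, vecMulVec_mul_vecMulVec, vecMulVec_smul, smul_smul, mul_assoc,
      inv_mul_cancel₀ hne, mul_one]
  have hgram : 1 - P = (1 - P)ᴴ * (1 - P) := by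
    rw [conjTranspose_sub, conjTranspose_one, hP, sub_mul, one_mul, mul_sub, mul_one, hPP,
      sub_self, sub_zero]
  rw [hgram]
  exact posSemidef_conjTranspose_mul_self _

end Field

variable {n 𝕜 : Type*} [Fintype n] [RCLike 𝕜]

open scoped MatrixOrder in
theorem PosSemidef.exists_pos_posSemidef_sub_smul_vecMulVec {ρ : Matrix n n 𝕜}
    (hρ : ρ.PosSemidef) {v : n → 𝕜} (hv : ρ *ᵥ v ≠ 0) :
    ∃ α : ℝ, 0 < α ∧ (ρ - (α : 𝕜) • vecMulVec (ρ *ᵥ v) (star (ρ *ᵥ v))).PosSemidef := by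
  classical
  set S := CFC.sqrt ρ
  have hS : Sᴴ = S := (CFC.sqrt_nonneg ρ).posSemidef.isHermitian
  have hSS : S * S = ρ := CFC.sqrt_mul_sqrt_self ρ hρ.nonneg
  set w := S *ᵥ v
  have hρv : ρ *ᵥ v = S *ᵥ w := by rw [mulVec_mulVec, hSS]
  have hw : w ≠ 0 := by
    intro h
    rw [hρv, h, mulVec_zero] at hv
    exact hv rfl
  obtain ⟨r, hr, hrw⟩ := RCLike.pos_iff_exists_ofReal.mp (dotProduct_star_self_pos_iff.mpr hw)
  refine ⟨r⁻¹, inv_pos.mpr hr, ?_⟩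
  have hsandwich : ρ - ((r⁻¹ : ℝ) : 𝕜) • vecMulVec (ρ *ᵥ v) (star (ρ *ᵥ v)) =
      S * (1 - (star w ⬝ᵥ w)⁻¹ • vecMulVec w (star w)) * Sᴴ := by
    rw [mul_sub, sub_mul, mul_one, mul_smul_comm, smul_mul_assoc, mul_vecMulVec, vecMulVec_mul,
      ← star_mulVec, hS, hSS, ← hρv, ← hrw, RCLike.ofReal_inv]
  rw [hsandwich]
  exact (posSemidef_one_sub_smul_vecMulVec hw).mul_mul_conjTranspose_same S

end Matrix

/-- any unit vector `χ` in the range of a density operator `ρ` appears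
in a decomposition `ρ = α|χ⟩⟨χ| + βρ̃` with `α > 0`, `β ≥ 0`, `ρ̃` positive semidefinite. -/
theorem range_vector_decomposition {n : Type*} [Fintype n]
    (ρ : Matrix n n ℂ) (h : IsDensity ρ)
    (χ : n → ℂ) (hr : inRange ρ χ) (hu : star χ ⬝ᵥ χ = 1) :
    ∃ (α β : ℝ) (ρt : Matrix n n ℂ), 0 < α ∧ 0 ≤ β ∧ ρt.PosSemidef ∧
      ρ = (α : ℂ) • pureProj χ + (β : ℂ) • ρt := by
  have hχ : χ ≠ 0 := by
    rintro rfl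
    simp at hu
  obtain ⟨v, rfl⟩ := hr
  obtain ⟨α, hα, hρt⟩ := h.1.exists_pos_posSemidef_sub_smul_vecMulVec hχ
  refine ⟨α, 1, _, hα, zero_le_one, hρt, ?_⟩
  rw [Complex.ofReal_one, one_smul]
  exact (add_sub_cancel _ _).symm
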